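/- One-step descent inequality for Lloyd's optimal quantization map: let μ be a compactly supported absolutely continuous probability measure on ℝ^d, Y ∉ D_N with all Voronoi cells of positive μ-measure, and let Y' = T_N(Y) be given by the Voronoi barycenters, i.e. y'_i = (∫_{V_i(Y)} x dμ(x)) / μ(V_i(Y)). Then G_N(Y) ≥ G_N(Y') + (1/2) Σ_{i=1}^N μ(V_i(Y)) ‖y'_i − y_i‖², where G_N(Y) = (1/2) ∫ min_i ‖x − y_i‖² dμ(x). -/

import Mathlib

/-!
Off the hyperplanes equidistant from two of the points `Y i`, a finite union of `volume`-null
sets and hence `μ`-null, the Voronoi cells partition the space, and on the cell `V_i` the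
minimum `⨅ j, ‖x - Y j‖ ^ 2` is `‖x - Y i‖ ^ 2`. The bias–variance identity about the barycenter
`Y' i` splits `∫_{V_i} ‖x - Y i‖ ^ 2` into `∫_{V_i} ‖x - Y' i‖ ^ 2 + μ(V_i) ‖Y' i - Y i‖ ^ 2`,
and integrating `‖x - Y' i‖ ^ 2 ≥ ⨅ j, ‖x - Y' j‖ ^ 2` over the cells bounds the sum of the
first terms below by `2 G_N(Y')`.
-/

open MeasureTheory

/-- The open Voronoi cell of index `i` for the points `Y`. -/
def voronoiCell {d N : ℕ} (Y : Fin N → EuclideanSpace ℝ (Fin d)) (i : Fin N) :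
    Set (EuclideanSpace ℝ (Fin d)) :=
  {x | ∀ j, j ≠ i → ‖x - Y i‖ ^ 2 < ‖x - Y j‖ ^ 2}

/-- The optimal quantization functional `G_N(Y) = (1/2) ∫ min_i ‖x − y_i‖² dμ(x)`. -/
noncomputable def quantFun {d N : ℕ} (μ : Measure (EuclideanSpace ℝ (Fin d)))
    (Y : Fin N → EuclideanSpace ℝ (Fin d)) : ℝ :=
  (1 / 2) * ∫ x, (⨅ i, ‖x - Y i‖ ^ 2) ∂μ

open Set Function
open scoped RealInnerProductSpace

section BiasVariance

variable {α E : Type*} [MeasurableSpace α] [NormedAddCommGroup E] [InnerProductSpace ℝ E]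
  [CompleteSpace E] {ν : Measure α} [IsFiniteMeasure ν] {f : α → E}

theorem integral_norm_sub_sq_eq_integral_norm_sub_average_sq_add (hf : MemLp f 2 ν) (y : E) :
    ∫ x, ‖f x - y‖ ^ 2 ∂ν
      = ∫ x, ‖f x - ⨍ z, f z ∂ν‖ ^ 2 ∂ν + ν.real univ * ‖(⨍ z, f z ∂ν) - y‖ ^ 2 := by
  set c := ⨍ z, f z ∂ν
  have hfc : Integrable (fun x => f x - c) ν := (hf.integrable one_le_two).sub (integrable_const c)
  have hsq : Integrable (fun x => ‖f x - c‖ ^ 2) ν := (hf.sub (memLp_const c)).integrable_norm_pow'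
  have hcross : Integrable (fun x => 2 * ⟪c - y, f x - c⟫) ν := (hfc.const_inner _).const_mul 2
  have hcross_zero : ∫ x, ⟪c - y, f x - c⟫ ∂ν = 0 := by
    rw [integral_inner hfc, integral_sub_average, inner_zero_right]
  calc ∫ x, ‖f x - y‖ ^ 2 ∂ν
      = ∫ x, ‖f x - c‖ ^ 2 + 2 * ⟪c - y, f x - c⟫ + ‖c - y‖ ^ 2 ∂ν := by
        congr 1 with x
        rw [← sub_add_sub_cancel (f x) c y, norm_add_sq_real, real_inner_comm]
    _ = ∫ x, ‖f x - c‖ ^ 2 ∂ν + ν.real univ * ‖c - y‖ ^ 2 := by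
        have hsum : Integrable (fun x => ‖f x - c‖ ^ 2 + 2 * ⟪c - y, f x - c⟫) ν := hsq.add hcross
        rw [integral_add hsum (integrable_const _), integral_add hsq hcross, integral_const_mul,
          hcross_zero, integral_const, smul_eq_mul, mul_zero, add_zero]

end BiasVariance

theorem Continuous.memLp_of_isCompact_of_measure_compl_eq_zero {α E : Type*}
    [TopologicalSpace α] [MeasurableSpace α] [OpensMeasurableSpace α] [NormedAddCommGroup E]
    [SecondCountableTopologyEither α E] {μ : Measure α} [IsFiniteMeasure μ] {f : α → E}
    (hf : Continuous f) {K : Set α} (hK : IsCompact K) (hKμ : μ Kᶜ = 0) (p : ENNReal) :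
    MemLp f p μ := by
  obtain ⟨C, hC⟩ := hK.exists_bound_of_continuousOn hf.continuousOn
  exact MemLp.of_bound hf.aestronglyMeasurable C ((ae_iff.2 hKμ).mono hC)

theorem continuous_ciInf_of_fintype {α β ι : Type*} [TopologicalSpace α]
    [ConditionallyCompleteLinearOrder β] [TopologicalSpace β] [OrderClosedTopology β]
    [Fintype ι] [Nonempty ι] {f : ι → α → β} (hf : ∀ i, Continuous (f i)) :
    Continuous fun x => ⨅ i, f i x := by
  simp only [← Finset.inf'_univ_eq_ciInf]
  exact Continuous.finset_inf'_apply Finset.univ_nonempty fun i _ => hf i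

section Voronoi

variable {d N : ℕ} (Y : Fin N → EuclideanSpace ℝ (Fin d))

theorem isOpen_voronoiCell (i : Fin N) : IsOpen (voronoiCell Y i) := by
  simp only [voronoiCell, ofPred_forall]
  exact isOpen_iInter_of_finite fun j => isOpen_iInter_of_finite fun _ =>
    isOpen_lt (by fun_prop) (by fun_prop)

theorem measurableSet_voronoiCell (i : Fin N) : MeasurableSet (voronoiCell Y i) :=
  (isOpen_voronoiCell Y i).measurableSet

theorem pairwise_disjoint_voronoiCell : Pairwise (Disjoint on voronoiCell Y) :=
  fun i j hij => disjoint_left.2 fun _ hxi hxj => lt_asymm (hxi j hij.symm) (hxj i hij)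

theorem iInf_norm_sub_sq_eq_of_mem_voronoiCell {x : EuclideanSpace ℝ (Fin d)} {i : Fin N}
    (hx : x ∈ voronoiCell Y i) : ⨅ j, ‖x - Y j‖ ^ 2 = ‖x - Y i‖ ^ 2 := by
  have : Nonempty (Fin N) := ⟨i⟩
  refine le_antisymm (ciInf_le (Finite.bddBelow_range _) i) (le_ciInf fun j => ?_)
  rcases eq_or_ne j i with rfl | hj
  · rfl
  · exact (hx j hj).le

theorem compl_iUnion_voronoiCell_subset [NeZero N] :
    (⋃ i, voronoiCell Y i)ᶜ ⊆
      ⋃ (i) (j) (_ : i ≠ j), (AffineSubspace.perpBisector (Y i) (Y j) : Set _) := by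
  have : Nonempty (Fin N) := ⟨0⟩
  intro x hx
  simp only [mem_compl_iff, mem_iUnion, not_exists] at hx
  obtain ⟨i, hi⟩ := Finite.exists_min fun i => ‖x - Y i‖ ^ 2
  obtain ⟨j, hji, hle⟩ : ∃ j, j ≠ i ∧ ‖x - Y j‖ ^ 2 ≤ ‖x - Y i‖ ^ 2 := by
    simpa [voronoiCell] using hx i
  refine mem_iUnion₂.2 ⟨i, j, mem_iUnion.2 ⟨hji.symm, ?_⟩⟩
  rw [SetLike.mem_coe, AffineSubspace.mem_perpBisector_iff_dist_eq, dist_eq_norm, dist_eq_norm,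
    ← sq_eq_sq₀ (norm_nonneg _) (norm_nonneg _)]
  exact (hi j).antisymm hle

theorem volume_compl_iUnion_voronoiCell [NeZero N] (hY : Injective Y) :
    volume (⋃ i, voronoiCell Y i)ᶜ = 0 := by
  refine measure_mono_null (compl_iUnion_voronoiCell_subset Y) ?_
  refine measure_iUnion_null fun i => measure_iUnion_null fun j => measure_iUnion_null fun hij =>
    Measure.addHaar_affineSubspace _ _ ?_
  rw [Ne, AffineSubspace.perpBisector_eq_top]
  exact hY.ne hij

variable {μ : Measure (EuclideanSpace ℝ (Fin d))}

theorem integral_eq_sum_setIntegral_voronoiCell {E : Type*} [NormedAddCommGroup E]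
    [NormedSpace ℝ E] (hcover : μ (⋃ i, voronoiCell Y i)ᶜ = 0) {f : EuclideanSpace ℝ (Fin d) → E}
    (hf : Integrable f μ) : ∫ x, f x ∂μ = ∑ i, ∫ x in voronoiCell Y i, f x ∂μ := by
  rw [← integral_iUnion_fintype (measurableSet_voronoiCell Y) (pairwise_disjoint_voronoiCell Y)
    fun i => hf.integrableOn, Measure.restrict_eq_self_of_ae_mem (ae_iff.2 hcover)]

end Voronoi

section Quantization

variable {d N : ℕ} {μ : Measure (EuclideanSpace ℝ (Fin d))}

theorem integral_iInf_norm_sub_sq_eq_sum {Y : Fin N → EuclideanSpace ℝ (Fin d)}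
    (hcover : μ (⋃ i, voronoiCell Y i)ᶜ = 0) (hint : Integrable (fun x => ⨅ j, ‖x - Y j‖ ^ 2) μ) :
    ∫ x, ⨅ j, ‖x - Y j‖ ^ 2 ∂μ = ∑ i, ∫ x in voronoiCell Y i, ‖x - Y i‖ ^ 2 ∂μ := by
  rw [integral_eq_sum_setIntegral_voronoiCell Y hcover hint]
  exact Finset.sum_congr rfl fun i _ => setIntegral_congr_fun (measurableSet_voronoiCell Y i)
    fun x hx => iInf_norm_sub_sq_eq_of_mem_voronoiCell Y hx

theorem integral_iInf_norm_sub_sq_le_sum {Y Z : Fin N → EuclideanSpace ℝ (Fin d)}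
    (hcover : μ (⋃ i, voronoiCell Y i)ᶜ = 0) (hint : Integrable (fun x => ⨅ j, ‖x - Z j‖ ^ 2) μ)
    (hintZ : ∀ i, Integrable (fun x => ‖x - Z i‖ ^ 2) μ) :
    ∫ x, ⨅ j, ‖x - Z j‖ ^ 2 ∂μ ≤ ∑ i, ∫ x in voronoiCell Y i, ‖x - Z i‖ ^ 2 ∂μ := by
  rw [integral_eq_sum_setIntegral_voronoiCell Y hcover hint]
  exact Finset.sum_le_sum fun i _ => integral_mono hint.integrableOn (hintZ i).integrableOn
    fun x => ciInf_le (Finite.bddBelow_range _) i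

end Quantization

theorem lloyd_descent_general {d N : ℕ} [NeZero N]
    (μ : Measure (EuclideanSpace ℝ (Fin d))) [IsProbabilityMeasure μ]
    (hac : μ ≪ volume) (K : Set (EuclideanSpace ℝ (Fin d)))
    (hK : IsCompact K) (hKfull : μ Kᶜ = 0)
    (Y : Fin N → EuclideanSpace ℝ (Fin d))
    (hY : ∀ i j : Fin N, i ≠ j → Y i ≠ Y j)
    (Y' : Fin N → EuclideanSpace ℝ (Fin d))
    (hY' : ∀ i, Y' i = (μ (voronoiCell Y i)).toReal⁻¹ • ∫ x in voronoiCell Y i, x ∂μ) :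
    quantFun μ Y ≥ quantFun μ Y'
      + (1 / 2) * ∑ i, (μ (voronoiCell Y i)).toReal * ‖Y' i - Y i‖ ^ 2 := by
  have hcover : μ (⋃ i, voronoiCell Y i)ᶜ = 0 :=
    hac (volume_compl_iUnion_voronoiCell Y (injective_iff_pairwise_ne.2 fun i j => hY i j))
  have hint {g : EuclideanSpace ℝ (Fin d) → ℝ} (hg : Continuous g) : Integrable g μ :=
    memLp_one_iff_integrable.1 (hg.memLp_of_isCompact_of_measure_compl_eq_zero hK hKfull 1)
  have hsq (z : EuclideanSpace ℝ (Fin d)) : Continuous fun x => ‖x - z‖ ^ 2 := by fun_prop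
  have hbias_variance (i : Fin N) : ∫ x in voronoiCell Y i, ‖x - Y i‖ ^ 2 ∂μ =
      ∫ x in voronoiCell Y i, ‖x - Y' i‖ ^ 2 ∂μ
        + (μ (voronoiCell Y i)).toReal * ‖Y' i - Y i‖ ^ 2 := by
    rw [hY' i, ← measureReal_def, ← setAverage_eq, ← measureReal_restrict_apply_univ]
    exact integral_norm_sub_sq_eq_integral_norm_sub_average_sq_add
      ((continuous_id.memLp_of_isCompact_of_measure_compl_eq_zero hK hKfull 2).restrict _) _
  calc quantFun μ Y
      = 1 / 2 * ∑ i, ∫ x in voronoiCell Y i, ‖x - Y i‖ ^ 2 ∂μ := by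
        rw [quantFun, integral_iInf_norm_sub_sq_eq_sum hcover
          (hint (continuous_ciInf_of_fintype fun i => hsq (Y i)))]
    _ = 1 / 2 * ∑ i, ∫ x in voronoiCell Y i, ‖x - Y' i‖ ^ 2 ∂μ
          + 1 / 2 * ∑ i, (μ (voronoiCell Y i)).toReal * ‖Y' i - Y i‖ ^ 2 := by
        simp only [hbias_variance, Finset.sum_add_distrib, mul_add]
    _ ≥ quantFun μ Y' + 1 / 2 * ∑ i, (μ (voronoiCell Y i)).toReal * ‖Y' i - Y i‖ ^ 2 := by
        rw [quantFun]
        gcongr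
        exact integral_iInf_norm_sub_sq_le_sum hcover
          (hint (continuous_ciInf_of_fintype fun i => hsq (Y' i))) fun i => hint (hsq (Y' i))

/-- One-step descent inequality for Lloyd's optimal quantization map. -/
theorem lloyd_descent {d N : ℕ} [NeZero N]
    (μ : Measure (EuclideanSpace ℝ (Fin d))) [IsProbabilityMeasure μ]
    (hac : μ ≪ volume) (K : Set (EuclideanSpace ℝ (Fin d)))
    (hK : IsCompact K) (hKfull : μ Kᶜ = 0)
    (Y : Fin N → EuclideanSpace ℝ (Fin d))
    (hY : ∀ i j : Fin N, i ≠ j → Y i ≠ Y j)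
    (hpos : ∀ i, 0 < μ (voronoiCell Y i))
    (Y' : Fin N → EuclideanSpace ℝ (Fin d))
    (hY' : ∀ i, Y' i = (μ (voronoiCell Y i)).toReal⁻¹ • ∫ x in voronoiCell Y i, x ∂μ) :
    quantFun μ Y ≥ quantFun μ Y'
      + (1 / 2) * ∑ i, (μ (voronoiCell Y i)).toReal * ‖Y' i - Y i‖ ^ 2 :=
  lloyd_descent_general μ hac K hK hKfull Y hY Y' hY'
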